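/- arXiv:2402.02001 — 7 statements merged into one kernel-verified Lean document; each statement's English description precedes it below -/
import Mathlib

section
/- Let T be a finite set of pairs (x, y) ∈ A × B (a finite relation over attributes X and Y) with |T| = M ≥ 2. Then T can be partitioned into at most k := 2·⌈log₂ M⌉ sub-relations T¹, …, T^k such that for every i, |π_X(T^i)| · deg_{T^i}(Y|X) ≤ M, where π_X(T^i) is the set of x-values appearing in T^i and deg_{T^i}(Y|X) := max over x of the number of pairs in T^i with first coordinate x. -/
/-- `deg_T(Y|X)`: the maximal number of tuples of `T` sharing a first coordinate. -/
def degYX {A B : Type*} [DecidableEq A] [DecidableEq B] (T : Finset (A × B)) : ℕ :=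
  (T.image Prod.fst).sup fun x => (T.filter fun p => p.1 = x).card

/-!
Bucket each `x` by the dyadic scale `2 ^ j ≤ deg_T x < 2 ^ (j + 1)` of its degree, capping `j`
below `⌈log₂ M⌉`. Since all `x` in bucket `j` have degree at least `2 ^ j`, the bucket has at most
`M / 2 ^ j` elements. Splitting every fibre of `T` into two halves of size at most `⌈deg_T x / 2⌉`
brings the degree of each half down to `2 ^ j` (for the capped top bucket this uses
`deg_T x ≤ M ≤ 2 ^ ⌈log₂ M⌉`), so each of the `2 ⌈log₂ M⌉` pieces satisfies the bound.
-/

open Finset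

theorem Finset.exists_fin_partition_of_coloring {α ι : Type*} [Fintype ι] [DecidableEq ι]
    (T : Finset α) (c : α → ι) (Q : Finset α → Prop) (hQ : ∀ i, Q (T.filter fun a => c a = i)) :
    ∃ P : Fin (Fintype.card ι) → Finset α,
      (∀ i j, i ≠ j → Disjoint (P i) (P j)) ∧ (∀ a, a ∈ T ↔ ∃ i, a ∈ P i) ∧ ∀ i, Q (P i) := by
  let e := Fintype.equivFin ι
  refine ⟨fun i => T.filter fun a => c a = e.symm i, fun i j hij => ?_, fun a => ?_,
    fun i => hQ _⟩
  · exact disjoint_filter.2 fun a _ hi hj => hij (e.symm.injective (hi.symm.trans hj))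
  · exact ⟨fun ha => ⟨e (c a), by simp [ha]⟩, fun ⟨i, hi⟩ => (mem_filter.1 hi).1⟩

theorem Nat.pow_min_log_le {d : ℕ} (hd : d ≠ 0) (n : ℕ) : 2 ^ min (Nat.log 2 d) n ≤ d :=
  (Nat.pow_le_pow_right two_pos (min_le_left _ _)).trans (Nat.pow_log_le_self 2 hd)

theorem Nat.sub_div_two_le_pow_min_log {d n : ℕ} (hd : d ≤ 2 ^ (n + 1)) :
    d - d / 2 ≤ 2 ^ min (Nat.log 2 d) n := by
  rcases le_total (Nat.log 2 d) n with h | h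
  · have := Nat.lt_pow_succ_log_self one_lt_two d
    rw [min_eq_left h]
    rw [pow_succ] at this
    omega
  · rw [min_eq_right h]
    rw [pow_succ] at hd
    omega

section Relation

variable {A B : Type*} [DecidableEq A]

def fiber (T : Finset (A × B)) (x : A) : Finset (A × B) :=
  T.filter fun p => p.1 = x

theorem fiber_mono {S T : Finset (A × B)} (h : S ⊆ T) (x : A) : fiber S x ⊆ fiber T x :=
  filter_subset_filter _ h

theorem card_fiber_le (T : Finset (A × B)) (x : A) : (fiber T x).card ≤ T.card :=
  card_filter_le _ _

theorem fiber_nonempty {T : Finset (A × B)} {x : A} (hx : x ∈ T.image Prod.fst) :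
    (fiber T x).Nonempty := by
  obtain ⟨p, hp, rfl⟩ := mem_image.1 hx
  exact ⟨p, mem_filter.2 ⟨hp, rfl⟩⟩

theorem sum_card_fiber_le (T : Finset (A × B)) (s : Finset A) :
    ∑ x ∈ s, (fiber T x).card ≤ T.card :=
  (sum_card_fiberwise_eq_card_filter T s Prod.fst).trans_le (card_filter_le _ _)

theorem exists_fiberwise_halving (T : Finset (A × B)) :
    ∃ half : A × B → Bool, ∀ x b,
      (fiber (T.filter fun p => half p = b) x).card ≤
        (fiber T x).card - (fiber T x).card / 2 := by
  classical
  choose S hST hS using fun x =>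
    exists_subset_card_eq (s := fiber T x) (Nat.div_le_self (fiber T x).card 2)
  refine ⟨fun p => decide (p ∈ S p.1), fun x b => ?_⟩
  have hfiber : fiber (T.filter fun p => decide (p ∈ S p.1) = b) x =
      (fiber T x).filter fun p => decide (p ∈ S x) = b := by
    ext p
    simp only [fiber, mem_filter]
    constructor
    · rintro ⟨⟨hp, hb⟩, rfl⟩; exact ⟨⟨hp, rfl⟩, hb⟩
    · rintro ⟨⟨hp, rfl⟩, hb⟩; exact ⟨⟨hp, hb⟩, rfl⟩
  have hin : ((fiber T x).filter fun p => p ∈ S x) = S x := by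
    rw [filter_mem_eq_inter, inter_eq_right.2 (hST x)]
  have hsplit := card_filter_add_card_filter_not (s := fiber T x) (· ∈ S x)
  rw [hin, hS] at hsplit
  rw [hfiber]
  cases b
  · simp only [decide_eq_false_iff_not]; omega
  · simp only [decide_eq_true_eq, hin, hS]; omega

variable [DecidableEq B]

theorem card_image_fst_mul_degYX_le {S T : Finset (A × B)} (D : ℕ)
    (hT : ∀ p ∈ S, D ≤ (fiber T p.1).card) (hS : ∀ p ∈ S, (fiber S p.1).card ≤ D) :
    (S.image Prod.fst).card * degYX S ≤ T.card :=
  calc (S.image Prod.fst).card * degYX S ≤ (S.image Prod.fst).card * D :=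
        Nat.mul_le_mul_left _ (Finset.sup_le (forall_mem_image.2 hS))
    _ = ∑ _x ∈ S.image Prod.fst, D := by rw [sum_const, smul_eq_mul]
    _ ≤ ∑ x ∈ S.image Prod.fst, (fiber T x).card := sum_le_sum (forall_mem_image.2 hT)
    _ ≤ T.card := sum_card_fiber_le T _

end Relation

theorem stmt_6 {A B : Type*} [DecidableEq A] [DecidableEq B]
    (T : Finset (A × B)) (M : ℕ) (hM : T.card = M) (hM2 : 2 ≤ M) :
    ∃ k : ℕ, k ≤ 2 * Nat.clog 2 M ∧
      ∃ P : Fin k → Finset (A × B),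
        (∀ i j : Fin k, i ≠ j → Disjoint (P i) (P j)) ∧
        (∀ t : A × B, t ∈ T ↔ ∃ i : Fin k, t ∈ P i) ∧
        (∀ i : Fin k, ((P i).image Prod.fst).card * degYX (P i) ≤ M) := by
  obtain ⟨n, hn⟩ : ∃ n, Nat.clog 2 M = n + 1 :=
    ⟨_, (Nat.succ_pred_eq_of_pos (Nat.clog_pos one_lt_two hM2)).symm⟩
  obtain ⟨half, hhalf⟩ := exists_fiberwise_halving T
  let level : A → ℕ := fun x => min (Nat.log 2 (fiber T x).card) n
  have hlow : ∀ p ∈ T, 2 ^ level p.1 ≤ (fiber T p.1).card := fun p hp =>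
    Nat.pow_min_log_le (fiber_nonempty (mem_image_of_mem _ hp)).card_pos.ne' n
  have hhigh : ∀ x, (fiber T x).card - (fiber T x).card / 2 ≤ 2 ^ level x := fun x =>
    Nat.sub_div_two_le_pow_min_log <| calc
      (fiber T x).card ≤ M := hM ▸ card_fiber_le T x
      _ ≤ 2 ^ (n + 1) := hn ▸ Nat.le_pow_clog one_lt_two M
  let c : A × B → Fin (n + 1) × Bool :=
    fun p => (⟨level p.1, Nat.lt_succ_of_le (min_le_right _ _)⟩, half p)
  obtain ⟨P, hdisj, hcover, hbound⟩ := Finset.exists_fin_partition_of_coloring T c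
    (fun S => (S.image Prod.fst).card * degYX S ≤ M) fun ⟨j, b⟩ => by
      refine hM ▸ card_image_fst_mul_degYX_le (2 ^ j.1) (fun p hp => ?_) (fun p hp => ?_)
      all_goals
        obtain ⟨hpT, hpc⟩ := mem_filter.1 hp
        rw [← congrArg Fin.val (Prod.mk.inj hpc).1]
      · exact hlow p hpT
      · have hsub : T.filter (fun q => c q = (j, b)) ⊆ T.filter fun q => half q = b :=
          fun q hq => mem_filter.2 ⟨(mem_filter.1 hq).1, congrArg Prod.snd (mem_filter.1 hq).2⟩
        exact (card_le_card (fiber_mono hsub p.1)).trans ((hhalf p.1 b).trans (hhigh p.1))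
  refine ⟨_, ?_, P, hdisj, hcover, hbound⟩
  simp only [Fintype.card_prod, Fintype.card_fin, Fintype.card_bool, hn]
  omega
end

section
/- Let V be a finite set, 𝒵 a nonempty finite family of subsets of V, Δ a finite index set of pairs (Y|X) of disjoint subsets of V, and n : Δ → ℝ≥0. Suppose the optimum opt := max over polymatroids h on V with h(X∪Y) − h(X) ≤ n(Y|X) for all (Y|X) ∈ Δ, of min_{Z ∈ 𝒵} h(Z), is finite. Then there exist nonnegative coefficients λ : 𝒵 → ℝ with Σ λ = 1 and w : Δ → ℝ≥0 such that Σ_{Z} λ_Z · h(Z) ≤ Σ_{δ=(Y|X)} w_δ · (h(X∪Y) − h(X)) holds for every polymatroid h on V, and opt = Σ_δ w_δ · n_δ. -/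
def IsPolymatroid {V : Type*} [DecidableEq V] (h : Finset V → ℝ) : Prop :=
  h ∅ = 0 ∧ (∀ A B : Finset V, A ⊆ B → h A ≤ h B) ∧
    (∀ A B : Finset V, h (A ∪ B) + h (A ∩ B) ≤ h A + h B)

/-!
The max-min problem is a linear program in the variables `t` and `h A` for `A ⊆ U`, where `U` is a
finite set containing every set of `𝒵` and of `Δ`: maximise `t` subject to monotonicity and
submodularity of `h`, `h (X ∪ Y) - h X ≤ n (Y|X)`, and `t ≤ h Z - h ∅`. (Normalising by `h ∅`
instead of imposing `h ∅ = 0` turns every feasible point into a polymatroid.) An optimal dual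
solution gives `λ` and `w` as the multipliers of the last two families of constraints; the
multipliers of the first two witness `∑ λ_Z h Z ≤ ∑ w_δ (h (X ∪ Y) - h X)` on polymatroids.
Strong duality follows from Farkas' lemma: a finitely generated cone is closed (by Carathéodory's
theorem it is a finite union of linear images of orthants), so a point outside it can be separated
from it.
-/

open Finset Matrix

theorem Finset.subtype_union {α : Type*} [DecidableEq α] (p : α → Prop) [DecidablePred p]
    (A B : Finset α) : (A ∪ B).subtype p = A.subtype p ∪ B.subtype p := by
  ext; simp

theorem Finset.subtype_inter {α : Type*} [DecidableEq α] (p : α → Prop) [DecidablePred p]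
    (A B : Finset α) : (A ∩ B).subtype p = A.subtype p ∩ B.subtype p := by
  ext; simp

section Caratheodory

variable {E ρ : Type*} [AddCommGroup E] [Module ℝ E] [DecidableEq ρ]

theorem exists_erase_sum_smul_eq_of_pos {v : ρ → E} {s : Finset ρ} {c g : ρ → ℝ}
    (hc : ∀ i ∈ s, 0 ≤ c i) (hg : ∑ i ∈ s, g i • v i = 0) {i : ρ} (hi : i ∈ s) (hgi : 0 < g i) :
    ∃ k ∈ s, ∃ d : ρ → ℝ, (∀ j ∈ s.erase k, 0 ≤ d j) ∧
      ∑ j ∈ s.erase k, d j • v j = ∑ j ∈ s, c j • v j := by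
  -- move along the relation `g` until the first coefficient `c k` reaches zero
  obtain ⟨k, hkP, hk_min⟩ := (s.filter (0 < g ·)).exists_min_image (fun j => c j / g j)
    ⟨i, mem_filter.mpr ⟨hi, hgi⟩⟩
  obtain ⟨hks, hgk⟩ := mem_filter.mp hkP
  set τ := c k / g k
  have hτ : 0 ≤ τ := div_nonneg (hc k hks) hgk.le
  refine ⟨k, hks, fun j => c j - τ * g j, fun j hj => ?_, ?_⟩
  · have hjs := mem_of_mem_erase hj
    rcases lt_or_ge 0 (g j) with hgj | hgj
    · have := hk_min j (mem_filter.mpr ⟨hjs, hgj⟩)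
      rw [le_div_iff₀ hgj] at this
      linarith
    · nlinarith [hc j hjs]
  · rw [sum_erase _ (by simp [τ, div_mul_cancel₀ _ hgk.ne'])]
    simp only [sub_smul, sum_sub_distrib, mul_smul, ← smul_sum, hg, smul_zero, sub_zero]

theorem exists_erase_sum_smul_eq_of_not_linearIndepOn {v : ρ → E} {s : Finset ρ} {c : ρ → ℝ}
    (hc : ∀ i ∈ s, 0 ≤ c i) (hs : ¬LinearIndepOn ℝ v s) :
    ∃ k ∈ s, ∃ d : ρ → ℝ, (∀ j ∈ s.erase k, 0 ≤ d j) ∧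
      ∑ j ∈ s.erase k, d j • v j = ∑ j ∈ s, c j • v j := by
  obtain ⟨g, hg, i, hi, hgi⟩ := not_linearIndepOn_finset_iff.mp hs
  rcases hgi.lt_or_gt with hgi | hgi
  · exact exists_erase_sum_smul_eq_of_pos (g := -g) hc (by simp [neg_smul, hg]) hi (by simpa)
  · exact exists_erase_sum_smul_eq_of_pos hc hg hi hgi

theorem exists_linearIndepOn_sum_smul_eq (v : ρ → E) (s : Finset ρ) (c : ρ → ℝ)
    (hc : ∀ i ∈ s, 0 ≤ c i) :
    ∃ t ⊆ s, LinearIndepOn ℝ v t ∧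
      ∃ d : ρ → ℝ, (∀ i ∈ t, 0 ≤ d i) ∧ ∑ i ∈ t, d i • v i = ∑ i ∈ s, c i • v i := by
  induction s using Finset.strongInduction generalizing c with
  | H s ih =>
    by_cases hs : LinearIndepOn ℝ v s
    · exact ⟨s, subset_rfl, hs, c, hc, rfl⟩
    obtain ⟨k, hk, d, hd, hsum⟩ := exists_erase_sum_smul_eq_of_not_linearIndepOn hc hs
    obtain ⟨t, hts, ht, e, he, hesum⟩ := ih _ (erase_ssubset hk) d hd
    exact ⟨t, hts.trans (erase_subset k s), ht, e, he, hesum.trans hsum⟩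

end Caratheodory

section Closed

variable {E ρ : Type*} [AddCommGroup E] [Module ℝ E] [Fintype ρ]

theorem PointedCone.exists_nonneg_sum_smul_eq_of_mem_hull_range {v : ρ → E} {x : E}
    (hx : x ∈ PointedCone.hull ℝ (Set.range v)) : ∃ c : ρ → ℝ, 0 ≤ c ∧ ∑ i, c i • v i = x := by
  obtain ⟨c, rfl⟩ := (Submodule.mem_span_range_iff_exists_fun _).mp hx
  exact ⟨fun i => c i, fun i => (c i).2, rfl⟩

variable [TopologicalSpace E] [IsTopologicalAddGroup E] [ContinuousSMul ℝ E] [T2Space E]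

theorem isClosed_image_nonneg_of_linearIndependent {ι : Type*} [Fintype ι] {v : ι → E}
    (hv : LinearIndependent ℝ v) :
    IsClosed ((fun c : ι → ℝ => ∑ i, c i • v i) '' Set.Ici 0) := by
  have hker : LinearMap.ker (Fintype.linearCombination ℝ v) = ⊥ := by
    rw [LinearMap.ker_eq_bot']
    exact fun c hc => funext (Fintype.linearIndependent_iff.mp hv c hc)
  exact (LinearMap.isClosedEmbedding_of_injective hker).isClosedMap _ isClosed_Ici

theorem PointedCone.isClosed_hull_range (v : ρ → E) :
    IsClosed (PointedCone.hull ℝ (Set.range v) : Set E) := by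
  classical
  have : (PointedCone.hull ℝ (Set.range v) : Set E) = ⋃ t : {t : Finset ρ // LinearIndepOn ℝ v t},
      (fun c : t.1 → ℝ => ∑ i, c i • v i) '' Set.Ici 0 := by
    ext x
    simp only [SetLike.mem_coe, Set.mem_iUnion, Set.mem_image, Set.mem_Ici]
    constructor
    · intro hx
      obtain ⟨c, hc, rfl⟩ := exists_nonneg_sum_smul_eq_of_mem_hull_range hx
      obtain ⟨t, -, ht, d, hd, hsum⟩ := exists_linearIndepOn_sum_smul_eq v univ c (fun i _ => hc i)
      exact ⟨⟨t, ht⟩, fun i => d i, fun i => hd i i.2, by rw [← hsum, ← sum_coe_sort t]⟩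
    · rintro ⟨t, c, hc, rfl⟩
      exact sum_mem fun i _ => smul_mem _ (hc i) (Submodule.subset_span (Set.mem_range_self _))
  rw [this]
  exact isClosed_iUnion_of_finite fun t => isClosed_image_nonneg_of_linearIndependent t.2

end Closed

namespace Matrix

variable {ρ ι : Type*} [Fintype ι]

theorem farkas [Fintype ρ] (A : Matrix ρ ι ℝ) (b : ι → ℝ) :
    (∃ c, 0 ≤ c ∧ c ᵥ* A = b) ∨ ∃ z, 0 ≤ A *ᵥ z ∧ b ⬝ᵥ z < 0 := by
  classical
  by_cases hb : b ∈ PointedCone.hull ℝ (Set.range A)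
  · obtain ⟨c, hc, hcA⟩ := PointedCone.exists_nonneg_sum_smul_eq_of_mem_hull_range hb
    exact .inl ⟨c, hc, by rw [vecMul_eq_sum, hcA]⟩
  let C : ProperCone ℝ (ι → ℝ) := ⟨_, PointedCone.isClosed_hull_range A⟩
  obtain ⟨f, hfC, hfb⟩ := C.hyperplane_separation_point (x₀ := b) hb
  have hf : ∀ x, f x = x ⬝ᵥ fun i => f (Pi.single i 1) := fun x => by
    have := LinearMap.pi_apply_eq_sum_univ (f : (ι → ℝ) →ₗ[ℝ] ℝ) x
    rw [ContinuousLinearMap.coe_coe] at this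
    rw [this]
    refine sum_congr rfl fun i _ => ?_
    congr 2
    ext j
    simp [Pi.single_apply, eq_comm]
  refine .inr ⟨_, fun r => ?_, by rwa [← hf]⟩
  simpa [mulVec, ← hf] using hfC _ (Submodule.subset_span (Set.mem_range_self r))

variable {A : Matrix ρ ι ℝ} {q : ρ → ℝ} {c : ι → ℝ} {β : ℝ}

theorem dotProduct_le_mul_of_mulVec_le_smul (hfeas : ∃ x, A *ᵥ x ≤ q)
    (hbound : ∀ x, A *ᵥ x ≤ q → c ⬝ᵥ x ≤ β) {s : ℝ} (hs : 0 ≤ s) {u : ι → ℝ}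
    (hu : A *ᵥ u ≤ s • q) : c ⬝ᵥ u ≤ s * β := by
  rcases hs.eq_or_lt with rfl | hs
  · obtain ⟨x, hx⟩ := hfeas
    rw [zero_mul]
    by_contra! hcu
    have hβ := hbound x hx
    set T := (β - c ⬝ᵥ x + 1) / (c ⬝ᵥ u)
    have hT : T * (c ⬝ᵥ u) = β - c ⬝ᵥ x + 1 := div_mul_cancel₀ _ hcu.ne'
    have := hbound (x + T • u) (by
      rw [mulVec_add, mulVec_smul]
      have : T • (A *ᵥ u) ≤ 0 := smul_nonpos_of_nonneg_of_nonpos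
        (div_nonneg (by linarith) hcu.le) (by simpa using hu)
      simpa using add_le_add hx this)
    rw [dotProduct_add, dotProduct_smul, smul_eq_mul] at this
    linarith
  · have := hbound (s⁻¹ • u) (by
      rw [mulVec_smul]
      calc s⁻¹ • (A *ᵥ u) ≤ s⁻¹ • s • q := smul_le_smul_of_nonneg_left hu (inv_nonneg.mpr hs.le)
        _ = q := inv_smul_smul₀ hs.ne' q)
    rw [dotProduct_smul, smul_eq_mul, inv_mul_le_iff₀ hs] at this
    exact this

theorem exists_dual_certificate [Fintype ρ] (hfeas : ∃ x, A *ᵥ x ≤ q)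
    (hbound : ∀ x, A *ᵥ x ≤ q → c ⬝ᵥ x ≤ β) :
    ∃ y, 0 ≤ y ∧ y ᵥ* A = c ∧ y ⬝ᵥ q ≤ β := by
  -- Farkas for the generators `(q r, A r)` and `(1, 0)` and the target `(β, c)`,
  -- the first coordinate being `none`
  let G : Matrix (Option ρ) (Option ι) ℝ :=
    fun r j => r.elim (j.elim 1 0) fun r => j.elim (q r) (A r)
  rcases farkas G (fun j => j.elim β c) with ⟨y, hy, hyG⟩ | ⟨z, hz, hzb⟩
  · refine ⟨fun r => y (some r), fun r => hy _, funext fun i => ?_, ?_⟩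
    · simpa [G, vecMul, dotProduct, Fintype.sum_option] using congrFun hyG (some i)
    · have := congrFun hyG none
      simp only [G, vecMul, dotProduct, Fintype.sum_option, Option.elim_none, Option.elim_some,
        mul_one] at this
      simp only [dotProduct]
      linarith [show 0 ≤ y none from hy none]
  · exfalso
    have hu : A *ᵥ (fun i => -z (some i)) ≤ z none • q := fun r => by
      have := hz (some r)
      simp only [G, mulVec, dotProduct, Fintype.sum_option, Option.elim_none, Option.elim_some,
        Pi.zero_apply] at this
      simp only [mulVec, dotProduct, mul_neg, sum_neg_distrib, Pi.smul_apply, smul_eq_mul]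
      linarith
    have := dotProduct_le_mul_of_mulVec_le_smul hfeas hbound
      (by simpa [G, mulVec, dotProduct] using hz none) hu
    simp only [dotProduct, mul_neg, sum_neg_distrib, Fintype.sum_option, Option.elim_none,
      Option.elim_some] at this hzb
    linarith

theorem dotProduct_le_of_vecMul_eq [Fintype ρ] {y : ρ → ℝ} (hy : 0 ≤ y) (hyA : y ᵥ* A = c)
    {x : ι → ℝ} (hx : A *ᵥ x ≤ q) : c ⬝ᵥ x ≤ y ⬝ᵥ q := by
  rw [← hyA, ← dotProduct_mulVec]
  exact dotProduct_le_dotProduct_of_nonneg_left hx hy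

end Matrix

namespace PolymatroidLP

variable {V : Type*} (U : Finset V) (Zs : Finset (Finset V)) (Δ : Finset (Finset V × Finset V))

abbrev Row := (Finset U × Finset U) ⊕ (Finset U × Finset U) ⊕ Δ ⊕ Zs

def ofSetFunction (h : Finset V → ℝ) (t : ℝ) : Option (Finset U) → ℝ :=
  fun j => j.elim t fun S => h (S.map (Function.Embedding.subtype _))

@[simp] theorem ofSetFunction_none (h : Finset V → ℝ) (t : ℝ) : ofSetFunction U h t none = t :=
  rfl

variable [DecidableEq V]

def coord (A : Finset V) : Option (Finset U) := some (A.subtype (· ∈ U))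

-- The column `none` is the variable `t`; row `r` is the constraint `matrix r ⬝ᵥ x ≤ bound n r`.
def matrix : Matrix (Row U Zs Δ) (Option (Finset U)) ℝ
  | .inl (A, B) => Pi.single (some A) 1 - Pi.single (some (A ∪ B)) 1
  | .inr (.inl (A, B)) => Pi.single (some (A ∪ B)) 1 + Pi.single (some (A ∩ B)) 1
      - Pi.single (some A) 1 - Pi.single (some B) 1
  | .inr (.inr (.inl δ)) => Pi.single (coord U (δ.1.1 ∪ δ.1.2)) 1 - Pi.single (coord U δ.1.1) 1
  | .inr (.inr (.inr Z)) => Pi.single none 1 - Pi.single (coord U Z) 1 + Pi.single (coord U ∅) 1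

def bound (n : Finset V × Finset V → ℝ) : Row U Zs Δ → ℝ
  | .inr (.inr (.inl δ)) => n δ
  | _ => 0

def toSetFunction (x : Option (Finset U) → ℝ) (A : Finset V) : ℝ :=
  x (coord U A) - x (coord U ∅)

def degreeWeight (y : Row U Zs Δ → ℝ) (δ : Finset V × Finset V) : ℝ :=
  if hδ : δ ∈ Δ then y (.inr (.inr (.inl ⟨δ, hδ⟩))) else 0

def objectiveWeight (y : Row U Zs Δ → ℝ) (Z : Finset V) : ℝ :=
  if hZ : Z ∈ Zs then y (.inr (.inr (.inr ⟨Z, hZ⟩))) else 0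

variable {U Zs Δ}

section mulVec

variable (x : Option (Finset U) → ℝ)

@[simp] theorem matrix_mulVec_mono (p : Finset U × Finset U) :
    (matrix U Zs Δ *ᵥ x) (.inl p) = x (some p.1) - x (some (p.1 ∪ p.2)) := by
  simp only [matrix, mulVec, sub_dotProduct, single_dotProduct, one_mul]

@[simp] theorem matrix_mulVec_submod (p : Finset U × Finset U) :
    (matrix U Zs Δ *ᵥ x) (.inr (.inl p)) =
      x (some (p.1 ∪ p.2)) + x (some (p.1 ∩ p.2)) - x (some p.1) - x (some p.2) := by
  simp only [matrix, mulVec, sub_dotProduct, add_dotProduct, single_dotProduct, one_mul]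

@[simp] theorem matrix_mulVec_degree (δ : Δ) :
    (matrix U Zs Δ *ᵥ x) (.inr (.inr (.inl δ))) =
      x (coord U (δ.1.1 ∪ δ.1.2)) - x (coord U δ.1.1) := by
  simp only [matrix, mulVec, sub_dotProduct, single_dotProduct, one_mul]

@[simp] theorem matrix_mulVec_objective (Z : Zs) :
    (matrix U Zs Δ *ᵥ x) (.inr (.inr (.inr Z))) = x none - x (coord U Z) + x (coord U ∅) := by
  simp only [matrix, mulVec, sub_dotProduct, add_dotProduct, single_dotProduct, one_mul]

end mulVec

theorem ofSetFunction_coord (h : Finset V → ℝ) (t : ℝ) {A : Finset V} (hA : A ⊆ U) :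
    ofSetFunction U h t (coord U A) = h A := by
  simp [ofSetFunction, coord, subtype_map_of_mem hA]

theorem matrix_mulVec_ofSetFunction_mono_nonpos {h : Finset V → ℝ} (hh : IsPolymatroid h)
    (t : ℝ) (p : Finset U × Finset U) : (matrix U Zs Δ *ᵥ ofSetFunction U h t) (.inl p) ≤ 0 := by
  simpa [ofSetFunction, map_union] using hh.2.1 _ _ subset_union_left

theorem matrix_mulVec_ofSetFunction_submod_nonpos {h : Finset V → ℝ} (hh : IsPolymatroid h)
    (t : ℝ) (p : Finset U × Finset U) :
    (matrix U Zs Δ *ᵥ ofSetFunction U h t) (.inr (.inl p)) ≤ 0 := by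
  have := hh.2.2 (p.1.map (Function.Embedding.subtype _)) (p.2.map (Function.Embedding.subtype _))
  simp only [matrix_mulVec_submod, ofSetFunction, Option.elim_some, map_union, map_inter]
  linarith

theorem matrix_mulVec_ofSetFunction_le {h : Finset V → ℝ} (hh : IsPolymatroid h)
    {n : Finset V × Finset V → ℝ} (hn : ∀ δ ∈ Δ, h (δ.1 ∪ δ.2) - h δ.1 ≤ n δ) {t : ℝ}
    (ht : ∀ Z ∈ Zs, t ≤ h Z) (hZU : ∀ Z ∈ Zs, Z ⊆ U) (hΔU : ∀ δ ∈ Δ, δ.1 ∪ δ.2 ⊆ U) :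
    matrix U Zs Δ *ᵥ ofSetFunction U h t ≤ bound U Zs Δ n := by
  rintro (⟨A, B⟩ | ⟨A, B⟩ | ⟨δ, hδ⟩ | ⟨Z, hZ⟩)
  · exact matrix_mulVec_ofSetFunction_mono_nonpos hh t _
  · exact matrix_mulVec_ofSetFunction_submod_nonpos hh t _
  · simpa [bound, ofSetFunction_coord h t (hΔU δ hδ),
      ofSetFunction_coord h t (subset_union_left.trans (hΔU δ hδ))] using hn δ hδ
  · simpa [bound, ofSetFunction_coord h t (hZU Z hZ), ofSetFunction_coord h t (empty_subset U),
      hh.1] using ht Z hZ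

section toSetFunction

variable {x : Option (Finset U) → ℝ} {n : Finset V × Finset V → ℝ}

theorem isPolymatroid_toSetFunction (hx : matrix U Zs Δ *ᵥ x ≤ bound U Zs Δ n) :
    IsPolymatroid (toSetFunction U x) := by
  refine ⟨sub_self _, fun A B hAB => ?_, fun A B => ?_⟩
  · have := hx (.inl (A.subtype (· ∈ U), B.subtype (· ∈ U)))
    simp only [matrix_mulVec_mono, bound, union_eq_right.mpr (subtype_mono hAB)] at this
    simp only [toSetFunction, coord]
    linarith
  · have := hx (.inr (.inl (A.subtype (· ∈ U), B.subtype (· ∈ U))))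
    simp only [matrix_mulVec_submod, bound] at this
    simp only [toSetFunction, coord, subtype_union, subtype_inter]
    linarith

theorem toSetFunction_sub_le (hx : matrix U Zs Δ *ᵥ x ≤ bound U Zs Δ n)
    {δ : Finset V × Finset V} (hδ : δ ∈ Δ) :
    toSetFunction U x (δ.1 ∪ δ.2) - toSetFunction U x δ.1 ≤ n δ := by
  have := hx (.inr (.inr (.inl ⟨δ, hδ⟩)))
  simp only [matrix_mulVec_degree, bound] at this
  simp only [toSetFunction]
  linarith

theorem le_toSetFunction (hx : matrix U Zs Δ *ᵥ x ≤ bound U Zs Δ n) {Z : Finset V}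
    (hZ : Z ∈ Zs) : x none ≤ toSetFunction U x Z := by
  have := hx (.inr (.inr (.inr ⟨Z, hZ⟩)))
  simp only [matrix_mulVec_objective, bound] at this
  simp only [toSetFunction]
  linarith

end toSetFunction

section weights

variable {y : Row U Zs Δ → ℝ}

theorem degreeWeight_nonneg (hy : 0 ≤ y) (δ : Finset V × Finset V) :
    0 ≤ degreeWeight U Zs Δ y δ := by
  unfold degreeWeight; split; exacts [hy _, le_rfl]

theorem objectiveWeight_nonneg (hy : 0 ≤ y) (Z : Finset V) : 0 ≤ objectiveWeight U Zs Δ y Z := by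
  unfold objectiveWeight; split; exacts [hy _, le_rfl]

theorem sum_degreeWeight_mul (f : Finset V × Finset V → ℝ) :
    ∑ δ ∈ Δ, degreeWeight U Zs Δ y δ * f δ = ∑ δ : Δ, y (.inr (.inr (.inl δ))) * f δ := by
  rw [← sum_coe_sort]; simp [degreeWeight]

theorem sum_objectiveWeight_mul (f : Finset V → ℝ) :
    ∑ Z ∈ Zs, objectiveWeight U Zs Δ y Z * f Z = ∑ Z : Zs, y (.inr (.inr (.inr Z))) * f Z := by
  rw [← sum_coe_sort]; simp [objectiveWeight]

theorem dotProduct_bound (n : Finset V × Finset V → ℝ) :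
    y ⬝ᵥ bound U Zs Δ n = ∑ δ ∈ Δ, degreeWeight U Zs Δ y δ * n δ := by
  simp [dotProduct, Fintype.sum_sum_type, bound, sum_degreeWeight_mul]

theorem sum_objectiveWeight (hyA : y ᵥ* matrix U Zs Δ = Pi.single none 1) :
    ∑ Z ∈ Zs, objectiveWeight U Zs Δ y Z = 1 := by
  have key : y ⬝ᵥ (matrix U Zs Δ *ᵥ Pi.single none 1) = 1 := by
    rw [dotProduct_mulVec, hyA, single_dotProduct]; simp
  simp only [dotProduct, Fintype.sum_sum_type, matrix_mulVec_mono, matrix_mulVec_submod,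
    matrix_mulVec_degree, matrix_mulVec_objective, coord] at key
  have := sum_objectiveWeight_mul (y := y) fun _ => 1
  simp only [mul_one] at this
  rw [this]
  simpa using key

theorem sum_objectiveWeight_mul_le (hyA : y ᵥ* matrix U Zs Δ = Pi.single none 1) (hy : 0 ≤ y)
    (hZU : ∀ Z ∈ Zs, Z ⊆ U) (hΔU : ∀ δ ∈ Δ, δ.1 ∪ δ.2 ⊆ U) {h : Finset V → ℝ}
    (hh : IsPolymatroid h) :
    ∑ Z ∈ Zs, objectiveWeight U Zs Δ y Z * h Z ≤
      ∑ δ ∈ Δ, degreeWeight U Zs Δ y δ * (h (δ.1 ∪ δ.2) - h δ.1) := by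
  have key : y ⬝ᵥ (matrix U Zs Δ *ᵥ ofSetFunction U h 0) = 0 := by
    rw [dotProduct_mulVec, hyA, single_dotProduct]; simp [ofSetFunction]
  rw [dotProduct, Fintype.sum_sum_type, Fintype.sum_sum_type, Fintype.sum_sum_type] at key
  have hmono := sum_nonpos fun p (_ : p ∈ univ) => mul_nonpos_of_nonneg_of_nonpos (hy (.inl p))
    (matrix_mulVec_ofSetFunction_mono_nonpos (Zs := Zs) (Δ := Δ) hh 0 p)
  have hsubmod := sum_nonpos fun p (_ : p ∈ univ) =>
    mul_nonpos_of_nonneg_of_nonpos (hy (.inr (.inl p)))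
      (matrix_mulVec_ofSetFunction_submod_nonpos (Zs := Zs) (Δ := Δ) hh 0 p)
  have hdeg : ∑ δ : Δ, y (.inr (.inr (.inl δ))) *
      (matrix U Zs Δ *ᵥ ofSetFunction U h 0) (.inr (.inr (.inl δ))) =
      ∑ δ ∈ Δ, degreeWeight U Zs Δ y δ * (h (δ.1 ∪ δ.2) - h δ.1) := by
    rw [sum_degreeWeight_mul]
    refine sum_congr rfl fun δ _ => ?_
    rw [matrix_mulVec_degree, ofSetFunction_coord h 0 (hΔU δ δ.2),
      ofSetFunction_coord h 0 (subset_union_left.trans (hΔU δ δ.2))]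
  have hobj : ∑ Z : Zs, y (.inr (.inr (.inr Z))) *
      (matrix U Zs Δ *ᵥ ofSetFunction U h 0) (.inr (.inr (.inr Z))) =
      -∑ Z ∈ Zs, objectiveWeight U Zs Δ y Z * h Z := by
    rw [sum_objectiveWeight_mul, ← sum_neg_distrib]
    refine sum_congr rfl fun Z _ => ?_
    rw [matrix_mulVec_objective, ofSetFunction_coord h 0 (hZU Z Z.2),
      ofSetFunction_coord h 0 (empty_subset U), hh.1]
    simp [ofSetFunction]
  linarith

end weights

end PolymatroidLP

open PolymatroidLP in
theorem stmt_10_general {V : Type*} [DecidableEq V]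
    (Zs : Finset (Finset V)) (hZ : Zs.Nonempty)
    (Δ : Finset (Finset V × Finset V))
    (n : Finset V × Finset V → ℝ)
    (opt : ℝ)
    (hopt_attained : ∃ h : Finset V → ℝ, IsPolymatroid h ∧
      (∀ δ ∈ Δ, h (δ.1 ∪ δ.2) - h δ.1 ≤ n δ) ∧ Zs.inf' hZ h = opt)
    (hopt_max : ∀ h : Finset V → ℝ, IsPolymatroid h →
      (∀ δ ∈ Δ, h (δ.1 ∪ δ.2) - h δ.1 ≤ n δ) → Zs.inf' hZ h ≤ opt) :
    ∃ (lam : Finset V → ℝ) (w : Finset V × Finset V → ℝ),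
      (∀ Z ∈ Zs, 0 ≤ lam Z) ∧ (∀ δ ∈ Δ, 0 ≤ w δ) ∧
      (∑ Z ∈ Zs, lam Z) = 1 ∧
      (∀ h : Finset V → ℝ, IsPolymatroid h →
        ∑ Z ∈ Zs, lam Z * h Z ≤ ∑ δ ∈ Δ, w δ * (h (δ.1 ∪ δ.2) - h δ.1)) ∧
      opt = ∑ δ ∈ Δ, w δ * n δ := by
  obtain ⟨h₀, hh₀, hn₀, hopt⟩ := hopt_attained
  obtain ⟨U, hZU, hΔU⟩ : ∃ U : Finset V, (∀ Z ∈ Zs, Z ⊆ U) ∧ ∀ δ ∈ Δ, δ.1 ∪ δ.2 ⊆ U :=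
    ⟨Zs.biUnion id ∪ Δ.biUnion fun δ => δ.1 ∪ δ.2,
      fun Z hZ => (subset_biUnion_of_mem id hZ).trans subset_union_left,
      fun δ hδ => (subset_biUnion_of_mem (fun δ => δ.1 ∪ δ.2) hδ).trans subset_union_right⟩
  have hfeas := matrix_mulVec_ofSetFunction_le hh₀ hn₀ (t := opt)
    (fun Z hZ' => hopt ▸ inf'_le h₀ hZ') hZU hΔU
  obtain ⟨y, hy, hyA, hyq⟩ := Matrix.exists_dual_certificate (c := Pi.single none 1) (β := opt)
    ⟨_, hfeas⟩ fun x hx => by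
      rw [single_dotProduct, one_mul]
      exact (le_inf' hZ _ fun Z hZ' => le_toSetFunction hx hZ').trans
        (hopt_max _ (isPolymatroid_toSetFunction hx) fun δ hδ => toSetFunction_sub_le hx hδ)
  refine ⟨objectiveWeight U Zs Δ y, degreeWeight U Zs Δ y, fun Z _ => objectiveWeight_nonneg hy Z,
    fun δ _ => degreeWeight_nonneg hy δ, sum_objectiveWeight hyA,
    fun h hh => sum_objectiveWeight_mul_le hyA hy hZU hΔU hh, ?_⟩
  rw [← dotProduct_bound]
  refine le_antisymm ?_ hyq
  simpa using Matrix.dotProduct_le_of_vecMul_eq hy hyA hfeas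

/-- A degree term `(Y|X)` is encoded as the pair `δ = (X, Y)` (condition first);
its value on `h` is `h (X ∪ Y) - h X`. -/
theorem stmt_10 {V : Type*} [DecidableEq V]
    (Zs : Finset (Finset V)) (hZ : Zs.Nonempty)
    (Δ : Finset (Finset V × Finset V)) (hΔ : ∀ δ ∈ Δ, Disjoint δ.1 δ.2)
    (n : Finset V × Finset V → ℝ) (hn : ∀ δ ∈ Δ, 0 ≤ n δ)
    (opt : ℝ)
    (hopt_attained : ∃ h : Finset V → ℝ, IsPolymatroid h ∧
      (∀ δ ∈ Δ, h (δ.1 ∪ δ.2) - h δ.1 ≤ n δ) ∧ Zs.inf' hZ h = opt)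
    (hopt_max : ∀ h : Finset V → ℝ, IsPolymatroid h →
      (∀ δ ∈ Δ, h (δ.1 ∪ δ.2) - h δ.1 ≤ n δ) → Zs.inf' hZ h ≤ opt) :
    ∃ (lam : Finset V → ℝ) (w : Finset V × Finset V → ℝ),
      (∀ Z ∈ Zs, 0 ≤ lam Z) ∧ (∀ δ ∈ Δ, 0 ≤ w δ) ∧
      (∑ Z ∈ Zs, lam Z) = 1 ∧
      (∀ h : Finset V → ℝ, IsPolymatroid h →
        ∑ Z ∈ Zs, lam Z * h Z ≤ ∑ δ ∈ Δ, w δ * (h (δ.1 ∪ δ.2) - h δ.1)) ∧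
      opt = ∑ δ ∈ Δ, w δ * n δ :=
  stmt_10_general Zs hZ Δ n opt hopt_attained hopt_max
end

section
/- Let R ⊆ A × B, S ⊆ B × C, U ⊆ C × D be finite relations each of size at most N. Then there exist sets P ⊆ A × B × C and Q ⊆ B × C × D with |P| + |Q| ≤ 2·N^{3/2} such that for every (x,y,z,w) with (x,y) ∈ R, (y,z) ∈ S, (z,w) ∈ U, either (x,y,z) ∈ P or (y,z,w) ∈ Q. -/
/-!
Split `B` at the threshold `t = √N` on the degree `deg y = #{x | (x, y) ∈ R}`. A tuple whose `y`
is light goes into `P`: there are at most `#S · t` of them, since each `(y, z) ∈ S` extends to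
at most `t` of them. A tuple whose `y` is heavy goes into `Q`: since the heavy degrees sum to at
most `#R`, there are at most `#R / t` heavy values, so at most `#U · #R / t` such tuples.
-/

open Finset

namespace Finset

variable {A B C D : Type*}

section Degree

variable [DecidableEq B]

def degree (R : Finset (A × B)) (y : B) : ℕ := #{r ∈ R | r.2 = y}

noncomputable def heavy (R : Finset (A × B)) (t : ℝ) : Finset B := {y ∈ R.image Prod.snd | t < degree R y}

theorem degree_le_of_notMem_heavy {R : Finset (A × B)} {t : ℝ} (ht : 0 ≤ t) {y : B}
    (hy : y ∉ heavy R t) : (degree R y : ℝ) ≤ t := by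
  by_cases hyR : y ∈ R.image Prod.snd
  · exact not_lt.1 fun h => hy (mem_filter.2 ⟨hyR, h⟩)
  · have : degree R y = 0 := card_eq_zero.2 <| filter_eq_empty_iff.2 fun r hr hry =>
      hyR (mem_image.2 ⟨r, hr, hry⟩)
    simpa [this] using ht

theorem card_heavy_mul_le (R : Finset (A × B)) (t : ℝ) : (#(heavy R t) : ℝ) * t ≤ #R := by
  calc (#(heavy R t) : ℝ) * t = ∑ _y ∈ heavy R t, t := by rw [sum_const, nsmul_eq_mul]
    _ ≤ ∑ y ∈ heavy R t, (degree R y : ℝ) := sum_le_sum fun y hy => (mem_filter.1 hy).2.le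
    _ ≤ ∑ y ∈ R.image Prod.snd, (degree R y : ℝ) :=
        sum_le_sum_of_subset_of_nonneg (filter_subset _ _) fun _ _ _ => Nat.cast_nonneg _
    _ = #R := by rw [card_eq_sum_card_image Prod.snd R]; push_cast; rfl

theorem card_heavy_le_sqrt {R : Finset (A × B)} {N : ℕ} (hR : #R ≤ N) :
    (#(heavy R √N) : ℝ) ≤ √N := by
  rcases N.eq_zero_or_pos with rfl | hN
  · have : R = ∅ := card_eq_zero.1 (Nat.le_zero.1 hR)
    simp [heavy, this]
  · have hsqrt : 0 < √(N : ℝ) := Real.sqrt_pos.2 (Nat.cast_pos.2 hN)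
    refine le_of_mul_le_mul_right ?_ hsqrt
    calc (#(heavy R √N) : ℝ) * √N ≤ #R := card_heavy_mul_le R _
      _ ≤ N := by exact_mod_cast hR
      _ = √N * √N := (Real.mul_self_sqrt (Nat.cast_nonneg N)).symm

end Degree

section Join

variable [DecidableEq A] [DecidableEq B] [DecidableEq C] [DecidableEq D]

def lightJoin (R : Finset (A × B)) (S : Finset (B × C)) (H : Finset B) : Finset (A × B × C) :=
  {s ∈ S | s.1 ∉ H}.biUnion fun s => {r ∈ R | r.2 = s.1}.image fun r => (r.1, s)

noncomputable def heavyJoin (S : Finset (B × C)) (U : Finset (C × D)) (H : Finset B) : Finset (B × C × D) :=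
  U.biUnion fun u => {y ∈ H | (y, u.1) ∈ S}.image fun y => (y, u)

theorem mem_lightJoin_or_mem_heavyJoin {R : Finset (A × B)} {S : Finset (B × C)}
    {U : Finset (C × D)} (H : Finset B) {x : A} {y : B} {z : C} {w : D}
    (hxy : (x, y) ∈ R) (hyz : (y, z) ∈ S) (hzw : (z, w) ∈ U) :
    (x, y, z) ∈ lightJoin R S H ∨ (y, z, w) ∈ heavyJoin S U H := by
  by_cases hy : y ∈ H
  · exact .inr <| mem_biUnion.2 ⟨(z, w), hzw, mem_image.2 ⟨y, mem_filter.2 ⟨hy, hyz⟩, rfl⟩⟩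
  · exact .inl <| mem_biUnion.2
      ⟨(y, z), mem_filter.2 ⟨hyz, hy⟩, mem_image.2 ⟨(x, y), mem_filter.2 ⟨hxy, rfl⟩, rfl⟩⟩

theorem card_lightJoin_le {R : Finset (A × B)} (S : Finset (B × C)) {H : Finset B} {t : ℝ}
    (ht : 0 ≤ t) (hlight : ∀ y ∉ H, (degree R y : ℝ) ≤ t) :
    (#(lightJoin R S H) : ℝ) ≤ #S * t := by
  calc (#(lightJoin R S H) : ℝ) ≤ ∑ s ∈ {s ∈ S | s.1 ∉ H}, (degree R s.1 : ℝ) := by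
        exact_mod_cast card_biUnion_le.trans (sum_le_sum fun _ _ => card_image_le)
    _ ≤ ∑ _s ∈ {s ∈ S | s.1 ∉ H}, t := sum_le_sum fun s hs => hlight _ (mem_filter.1 hs).2
    _ ≤ #S * t := by
        rw [sum_const, nsmul_eq_mul]
        gcongr
        exact filter_subset _ _

theorem card_heavyJoin_le (S : Finset (B × C)) (U : Finset (C × D)) (H : Finset B) :
    #(heavyJoin S U H) ≤ #U * #H :=
  card_biUnion_le_card_mul _ _ _ fun _ _ => card_image_le.trans (card_filter_le _ _)

end Join

end Finset

theorem stmt_12 {A B C D : Type*}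
    (R : Finset (A × B)) (S : Finset (B × C)) (U : Finset (C × D))
    (N : ℕ) (hR : R.card ≤ N) (hS : S.card ≤ N) (hU : U.card ≤ N) :
    ∃ (P : Finset (A × B × C)) (Q : Finset (B × C × D)),
      ((P.card : ℝ) + (Q.card : ℝ) ≤ 2 * (N : ℝ) ^ ((3 : ℝ) / 2)) ∧
      ∀ (x : A) (y : B) (z : C) (w : D),
        (x, y) ∈ R → (y, z) ∈ S → (z, w) ∈ U → (x, y, z) ∈ P ∨ (y, z, w) ∈ Q := by
  classical
  have ht : 0 ≤ √(N : ℝ) := Real.sqrt_nonneg _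
  refine ⟨lightJoin R S (heavy R √N), heavyJoin S U (heavy R √N), ?_,
    fun x y z w => mem_lightJoin_or_mem_heavyJoin _⟩
  have hP : (#(lightJoin R S (heavy R √N)) : ℝ) ≤ N * √N :=
    (card_lightJoin_le S ht fun _ => degree_le_of_notMem_heavy ht).trans (by gcongr)
  have hQ : (#(heavyJoin S U (heavy R √N)) : ℝ) ≤ N * √N :=
    calc (#(heavyJoin S U (heavy R √N)) : ℝ) ≤ #U * #(heavy R √N) := by
          exact_mod_cast card_heavyJoin_le S U _
      _ ≤ N * √N := by gcongr; exact card_heavy_le_sqrt hR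
  have hpow : (N : ℝ) ^ ((3 : ℝ) / 2) = N * √N := by
    rw [Real.rpow_div_two_eq_sqrt _ (Nat.cast_nonneg N), show (3 : ℝ) = (3 : ℕ) by norm_num,
      Real.rpow_natCast, pow_succ, Real.sq_sqrt (Nat.cast_nonneg N)]
  rw [hpow]
  linarith
end

section
/- Let R ⊆ A × B, S ⊆ B × C, T ⊆ A × C be finite relations. Then the number of triangles |{(x,y,z) : (x,y) ∈ R, (y,z) ∈ S, (x,z) ∈ T}| is at most √(|R| · |S| · |T|). -/
/-! Write the triangle count as `∑_{x,y} 1_R(x,y) · F(x,y)` with `F(x,y) = ∑_z 1_S(y,z) 1_T(x,z)`.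
Cauchy–Schwarz in `(x,y)` bounds its square by `|R| · ∑ F²`, and Cauchy–Schwarz in `z` bounds
`F(x,y)²` by `deg_S(y) · deg_T(x)`, whose sum over `(x,y)` is `|S| · |T|`. -/

open Finset

section TriangleSum

variable {α β γ R : Type*} [Fintype α] [Fintype β] [Fintype γ]
  [CommSemiring R] [LinearOrder R] [IsStrictOrderedRing R] [ExistsAddOfLE R]

theorem sum_sum_sq_sum_mul_le (s : β → γ → R) (t : α → γ → R) :
    ∑ x, ∑ y, (∑ z, s y z * t x z) ^ 2 ≤ (∑ y, ∑ z, s y z ^ 2) * ∑ x, ∑ z, t x z ^ 2 :=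
  calc ∑ x, ∑ y, (∑ z, s y z * t x z) ^ 2
      ≤ ∑ x, ∑ y, (∑ z, s y z ^ 2) * ∑ z, t x z ^ 2 :=
        sum_le_sum fun x _ => sum_le_sum fun y _ => sum_mul_sq_le_sq_mul_sq _ _ _
    _ = (∑ y, ∑ z, s y z ^ 2) * ∑ x, ∑ z, t x z ^ 2 := by
        simp_rw [← sum_mul, ← mul_sum]

theorem sum_triangle_sq_le (r : α → β → R) (s : β → γ → R) (t : α → γ → R) :
    (∑ x, ∑ y, ∑ z, r x y * s y z * t x z) ^ 2 ≤
      (∑ x, ∑ y, r x y ^ 2) * (∑ y, ∑ z, s y z ^ 2) * ∑ x, ∑ z, t x z ^ 2 :=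
  calc (∑ x, ∑ y, ∑ z, r x y * s y z * t x z) ^ 2
      = (∑ p : α × β, r p.1 p.2 * ∑ z, s p.2 z * t p.1 z) ^ 2 := by
        simp only [Fintype.sum_prod_type, mul_sum, mul_assoc]
    _ ≤ (∑ p : α × β, r p.1 p.2 ^ 2) * ∑ p : α × β, (∑ z, s p.2 z * t p.1 z) ^ 2 :=
        sum_mul_sq_le_sq_mul_sq _ _ _
    _ = (∑ x, ∑ y, r x y ^ 2) * ∑ x, ∑ y, (∑ z, s y z * t x z) ^ 2 := by
        simp only [Fintype.sum_prod_type]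
    _ ≤ (∑ x, ∑ y, r x y ^ 2) * (∑ y, ∑ z, s y z ^ 2) * ∑ x, ∑ z, t x z ^ 2 := by
        rw [mul_assoc]
        exact mul_le_mul_of_nonneg_left (sum_sum_sq_sum_mul_le s t)
          (sum_nonneg fun _ _ => sum_nonneg fun _ _ => sq_nonneg _)

end TriangleSum

theorem sum_sum_ite_mem_sq_eq_card {α β : Type*} [Fintype α] [Fintype β] [DecidableEq α] [DecidableEq β]
    (R : Finset (α × β)) :
    ∑ x, ∑ y, (if (x, y) ∈ R then 1 else 0 : ℕ) ^ 2 = #R := by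
  rw [← Fintype.sum_prod_type' fun x y => (if (x, y) ∈ R then 1 else 0 : ℕ) ^ 2]
  simp

theorem card_triangles_eq_sum {A B C : Type*} [Fintype A] [Fintype B] [Fintype C]
    [DecidableEq A] [DecidableEq B] [DecidableEq C]
    (R : Finset (A × B)) (S : Finset (B × C)) (T : Finset (A × C)) :
    #(univ.filter fun t : A × B × C =>
        (t.1, t.2.1) ∈ R ∧ (t.2.1, t.2.2) ∈ S ∧ (t.1, t.2.2) ∈ T) =
      ∑ x, ∑ y, ∑ z, (if (x, y) ∈ R then 1 else 0) * (if (y, z) ∈ S then 1 else 0) *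
        (if (x, z) ∈ T then 1 else 0) := by
  simp only [card_filter, Fintype.sum_prod_type, ite_zero_mul_ite_zero, and_assoc, mul_one]

theorem stmt_13 {A B C : Type*} [Fintype A] [Fintype B] [Fintype C]
    [DecidableEq A] [DecidableEq B] [DecidableEq C]
    (R : Finset (A × B)) (S : Finset (B × C)) (T : Finset (A × C)) :
    ((Finset.univ.filter fun t : A × B × C =>
        (t.1, t.2.1) ∈ R ∧ (t.2.1, t.2.2) ∈ S ∧ (t.1, t.2.2) ∈ T).card : ℝ) ≤
      Real.sqrt ((R.card : ℝ) * (S.card : ℝ) * (T.card : ℝ)) := by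
  have h := sum_triangle_sq_le (fun x y => if (x, y) ∈ R then 1 else 0)
    (fun y z => if (y, z) ∈ S then 1 else 0) (fun x z => if (x, z) ∈ T then 1 else 0)
  rw [← card_triangles_eq_sum, sum_sum_ite_mem_sq_eq_card, sum_sum_ite_mem_sq_eq_card, sum_sum_ite_mem_sq_eq_card] at h
  exact Real.le_sqrt_of_sq_le (by exact_mod_cast h)
end

section
/- Consider the 4-cycle over variables X,Y,Z,W with cardinality constraints h(XY) ≤ n, h(YZ) ≤ n, h(ZW) ≤ n, h(WX) ≤ n for a real n ≥ 0. Then for every polymatroid h on {X,Y,Z,W} satisfying these constraints, min( max(h(XYZ), h(ZWX)), max(h(YZW), h(WXY)) ) ≤ (3/2)·n. -/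
namespace IsPolymatroid

variable {V : Type*} [DecidableEq V] {h : Finset V → ℝ}

theorem nonneg (hp : IsPolymatroid h) (A : Finset V) : 0 ≤ h A :=
  hp.1 ▸ hp.2.1 ∅ A (Finset.empty_subset A)

theorem add_le_add_add_of_subset_union (hp : IsPolymatroid h) {P Q R : Finset V}
    (hQ : Q ⊆ P ∪ R) : h (P ∪ Q) + h (Q ∪ R) ≤ h P + h Q + h R := by
  have hPQ := hp.2.2 P Q
  have hQR := hp.2.2 Q R
  have hcover := hp.2.2 (P ∩ Q) (Q ∩ R)
  have hunion : P ∩ Q ∪ Q ∩ R = Q := by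
    rw [Finset.inter_comm P Q, ← Finset.inter_union_distrib_left]
    exact Finset.inter_eq_left.mpr hQ
  rw [hunion] at hcover
  linarith [hp.nonneg (P ∩ Q ∩ (Q ∩ R))]

end IsPolymatroid

theorem min_max_max_le_half {a₁ a₂ b₁ b₂ c : ℝ} (h₁₁ : a₁ + b₁ ≤ c) (h₁₂ : a₁ + b₂ ≤ c)
    (h₂₁ : a₂ + b₁ ≤ c) (h₂₂ : a₂ + b₂ ≤ c) : min (max a₁ a₂) (max b₁ b₂) ≤ c / 2 := by
  have hsum : max a₁ a₂ + max b₁ b₂ ≤ c := by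
    rw [max_add, add_max, add_max]
    exact max_le (max_le h₁₁ h₁₂) (max_le h₂₁ h₂₂)
  linarith [min_le_left (max a₁ a₂) (max b₁ b₂), min_le_right (max a₁ a₂) (max b₁ b₂)]

theorem stmt_16_general (n : ℝ) (h : Finset (Fin 4) → ℝ)
    (hpm : IsPolymatroid h)
    (hXY : h {0, 1} ≤ n) (hYZ : h {1, 2} ≤ n) (hZW : h {2, 3} ≤ n) (hWX : h {3, 0} ≤ n) :
    min (max (h {0, 1, 2}) (h {2, 3, 0})) (max (h {1, 2, 3}) (h {3, 0, 1}))
      ≤ (3 / 2) * n := by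
  have hXYZ_YZW := hpm.add_le_add_add_of_subset_union (P := {0, 1}) (Q := {1, 2}) (R := {2, 3})
    (by decide)
  have hWXY_XYZ := hpm.add_le_add_add_of_subset_union (P := {3, 0}) (Q := {0, 1}) (R := {1, 2})
    (by decide)
  have hYZW_ZWX := hpm.add_le_add_add_of_subset_union (P := {1, 2}) (Q := {2, 3}) (R := {3, 0})
    (by decide)
  have hZWX_WXY := hpm.add_le_add_add_of_subset_union (P := {2, 3}) (Q := {3, 0}) (R := {0, 1})
    (by decide)
  simp only [show ({0, 1} ∪ {1, 2} : Finset (Fin 4)) = {0, 1, 2} by decide,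
    show ({1, 2} ∪ {2, 3} : Finset (Fin 4)) = {1, 2, 3} by decide,
    show ({2, 3} ∪ {3, 0} : Finset (Fin 4)) = {2, 3, 0} by decide,
    show ({3, 0} ∪ {0, 1} : Finset (Fin 4)) = {3, 0, 1} by decide] at *
  rw [show (3 / 2 : ℝ) * n = 3 * n / 2 by ring]
  apply min_max_max_le_half <;> linarith

/-- Variables `X, Y, Z, W` of the 4-cycle are `0, 1, 2, 3 : Fin 4`. -/
theorem stmt_16 (n : ℝ) (hn : 0 ≤ n) (h : Finset (Fin 4) → ℝ)
    (hpm : IsPolymatroid h)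
    (hXY : h {0, 1} ≤ n) (hYZ : h {1, 2} ≤ n) (hZW : h {2, 3} ≤ n) (hWX : h {3, 0} ≤ n) :
    min (max (h {0, 1, 2}) (h {2, 3, 0})) (max (h {1, 2, 3}) (h {3, 0, 1}))
      ≤ (3 / 2) * n :=
  stmt_16_general n h hpm hXY hYZ hZW hWX
end

section
/- Consider the 4-cycle over variables X,Y,Z,W with cardinality constraints h(XY), h(YZ), h(ZW), h(WX) all ≤ n, n ≥ 0. For every tree decomposition of the 4-cycle query (equivalently: for every set family covering all four edges {X,Y},{Y,Z},{Z,W},{W,X} that satisfies the tree-decomposition running intersection property), some bag contains three consecutive cycle variables {X_{i−1}, X_i, X_{i+1}} (indices mod 4), and there exists a polymatroid h satisfying the constraints with h of that bag equal to 2n. Hence the degree-aware fractional hypertree width of the 4-cycle is at least 2n. -/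
open Finset

namespace SimpleGraph

variable {ι : Type*} {G : SimpleGraph ι}

/-- In a tree these are exactly the vertex sets of subtrees. -/
def IsPathConvex (G : SimpleGraph ι) (S : Set ι) : Prop :=
  ∀ ⦃i j : ι⦄ (p : G.Walk i j), p.IsPath → i ∈ S → j ∈ S → ∀ k ∈ p.support, k ∈ S

theorem IsPathConvex.exists_mem_support_inter [DecidableEq ι] (hG : G.Preconnected)
    {S T : Set ι} (hS : G.IsPathConvex S) (hT : G.IsPathConvex T) {a : ι} (haS : a ∈ S)
    (haT : a ∈ T) {b c : ι} (p : G.Walk b c) (hp : p.IsPath) (hpS : ∃ x ∈ p.support, x ∈ S)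
    (hcT : c ∈ T) : ∃ u ∈ p.support, u ∈ S ∧ u ∈ T := by
  induction p with
  | nil => simp_all
  | @cons b b' c hbb' q ih =>
    by_cases hqS : ∃ x ∈ q.support, x ∈ S
    · obtain ⟨u, hu, huS, huT⟩ := ih hp.of_cons hqS hcT
      exact ⟨u, by simp [hu], huS, huT⟩
    push Not at hqS
    have hbS : b ∈ S := by
      obtain ⟨x, hx, hxS⟩ := hpS
      rcases (by simpa using hx : x = b ∨ x ∈ q.support) with rfl | hxq
      exacts [hxS, absurd hxS (hqS x hxq)]
    -- `q` leaves `S` for good, so the path from `a` to `b` inside `S` extends by `p` to a path.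
    obtain ⟨r⟩ := hG a b
    have hrS : ∀ x ∈ r.bypass.support, x ∈ S := hS _ r.bypass_isPath haS hbS
    have hrp : (r.bypass.append (.cons hbb' q)).IsPath := by
      rw [Walk.isPath_def, Walk.support_append, Walk.support_cons, List.tail_cons]
      exact r.bypass_isPath.support_nodup.append hp.of_cons.support_nodup
        fun x hxr hxq => hqS x hxq (hrS x hxr)
    exact ⟨b, by simp, hbS, hT _ hrp haT hcT b (by simp)⟩

end SimpleGraph

open SimpleGraph

theorem exists_bag_three_consecutive {ι : Type*} {G : SimpleGraph ι} (hG : G.Preconnected)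
    (χ : ι → Finset (Fin 4))
    (hcover : ∀ a : Fin 4, ∃ i : ι, ({a, a + 1} : Finset (Fin 4)) ⊆ χ i)
    (hconvex : ∀ v : Fin 4, G.IsPathConvex {k | v ∈ χ k}) :
    ∃ (i : ι) (a : Fin 4), ({a - 1, a, a + 1} : Finset (Fin 4)) ⊆ χ i := by
  classical
  obtain ⟨i₀, h₀⟩ := hcover 0
  obtain ⟨i₁, h₁⟩ := hcover 1
  obtain ⟨i₂, h₂⟩ := hcover 2
  obtain ⟨i₃, h₃⟩ := hcover 3
  simp only [insert_subset_iff, singleton_subset_iff] at h₀ h₁ h₂ h₃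
  obtain ⟨w₀₃⟩ := hG i₀ i₃
  obtain ⟨w₃₂⟩ := hG i₃ i₂
  let p := (w₀₃.bypass.append w₃₂.bypass).bypass
  obtain ⟨u, hup, hu1, hu2⟩ := (hconvex 1).exists_mem_support_inter hG (hconvex 2)
    h₁.1 h₁.2 p (Walk.bypass_isPath _) ⟨i₀, p.start_mem_support, h₀.2⟩ h₂.1
  have hu : u ∈ w₀₃.bypass.support ∨ u ∈ w₃₂.bypass.support :=
    (Walk.mem_support_append_iff _ _).1 (Walk.support_bypass_subset_support _ hup)
  rcases hu with hu | hu
  · have hu0 : (0 : Fin 4) ∈ χ u := hconvex 0 _ w₀₃.bypass_isPath h₀.1 h₃.2 u hu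
    exact ⟨u, 1, by simp_all [insert_subset_iff]⟩
  · have hu3 : (3 : Fin 4) ∈ χ u := hconvex 3 _ w₃₂.bypass_isPath h₃.1 h₂.2 u hu
    exact ⟨u, 2, by simp_all [insert_subset_iff]⟩

theorem isPolymatroid_card_inter_mul {V : Type*} [DecidableEq V] {n : ℝ} (hn : 0 ≤ n)
    (D : Finset V) : IsPolymatroid fun S => (#(S ∩ D) : ℝ) * n := by
  refine ⟨by simp, fun A B hAB => ?_, fun A B => le_of_eq ?_⟩
  · exact mul_le_mul_of_nonneg_right
      (by exact_mod_cast card_le_card (inter_subset_inter_right hAB)) hn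
  · rw [← add_mul, ← add_mul, ← Nat.cast_add, ← Nat.cast_add, union_inter_distrib_right,
      inter_inter_distrib_right, card_union_add_card_inter]

theorem Fin4.card_edge_inter_le_one (a b : Fin 4) : #({b, b + 1} ∩ {a - 1, a + 1}) ≤ 1 := by
  revert a b; decide

theorem Fin4.card_pair_neighbours (a : Fin 4) : #({a - 1, a + 1} : Finset (Fin 4)) = 2 := by
  revert a; decide

theorem exists_polymatroid_of_consecutive {n : ℝ} (hn : 0 ≤ n) (a : Fin 4)
    {B : Finset (Fin 4)} (hB : ({a - 1, a + 1} : Finset (Fin 4)) ⊆ B) :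
    ∃ h : Finset (Fin 4) → ℝ, IsPolymatroid h ∧
      h {0, 1} ≤ n ∧ h {1, 2} ≤ n ∧ h {2, 3} ≤ n ∧ h {3, 0} ≤ n ∧ h B = 2 * n := by
  have hedge (b : Fin 4) : (#({b, b + 1} ∩ {a - 1, a + 1}) : ℝ) * n ≤ n :=
    mul_le_of_le_one_left hn (by exact_mod_cast Fin4.card_edge_inter_le_one a b)
  refine ⟨_, isPolymatroid_card_inter_mul hn {a - 1, a + 1}, hedge 0, hedge 1, hedge 2,
    hedge 3, ?_⟩
  simp [inter_eq_right.2 hB, Fin4.card_pair_neighbours]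

theorem stmt_17_general (n : ℝ) (hn : 0 ≤ n) {ι : Type*}
    (G : SimpleGraph ι) (hG : G.IsTree) (χ : ι → Finset (Fin 4))
    (hcover : ∀ a : Fin 4, ∃ i : ι, ({a, a + 1} : Finset (Fin 4)) ⊆ χ i)
    (hri : ∀ (v : Fin 4) (i j k : ι) (p : G.Walk i j), p.IsPath →
      v ∈ χ i → v ∈ χ j → k ∈ p.support → v ∈ χ k) :
    ∃ (i : ι) (a : Fin 4), ({a - 1, a, a + 1} : Finset (Fin 4)) ⊆ χ i ∧
      ∃ h : Finset (Fin 4) → ℝ, IsPolymatroid h ∧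
        h {0, 1} ≤ n ∧ h {1, 2} ≤ n ∧ h {2, 3} ≤ n ∧ h {3, 0} ≤ n ∧
        h (χ i) = 2 * n := by
  obtain ⟨i, a, hbag⟩ := exists_bag_three_consecutive hG.connected.preconnected χ hcover
    fun v _ _ p hp hi hj k hk => hri v _ _ k p hp hi hj hk
  exact ⟨i, a, hbag,
    exists_polymatroid_of_consecutive hn a (subset_trans (by simp [insert_subset_iff]) hbag)⟩

/-- The 4-cycle has variables `0, 1, 2, 3 : Fin 4` and edges `{a, a+1}` for `a : Fin 4`.
A tree decomposition is given by a tree `G` on a nonempty node type `ι`, with bags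
`χ : ι → Finset (Fin 4)`, covering every edge, and satisfying the running
intersection property (bags containing any fixed variable are connected). -/
theorem stmt_17 (n : ℝ) (hn : 0 ≤ n) {ι : Type*} [Nonempty ι]
    (G : SimpleGraph ι) (hG : G.IsTree) (χ : ι → Finset (Fin 4))
    (hcover : ∀ a : Fin 4, ∃ i : ι, ({a, a + 1} : Finset (Fin 4)) ⊆ χ i)
    (hri : ∀ (v : Fin 4) (i j k : ι) (p : G.Walk i j), p.IsPath →
      v ∈ χ i → v ∈ χ j → k ∈ p.support → v ∈ χ k) :
    ∃ (i : ι) (a : Fin 4), ({a - 1, a, a + 1} : Finset (Fin 4)) ⊆ χ i ∧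
      ∃ h : Finset (Fin 4) → ℝ, IsPolymatroid h ∧
        h {0, 1} ≤ n ∧ h {1, 2} ≤ n ∧ h {2, 3} ≤ n ∧ h {3, 0} ≤ n ∧
        h (χ i) = 2 * n :=
  stmt_17_general n hn G hG χ hcover hri
end

section
/- Let Σ_in be a finite set of finite relations over variables V, and suppose λ : Σ_out → ℝ≥0 with Σ λ = 1 and w : Δ → ℝ≥0 satisfy: Σ_{Z ∈ Σ_out} λ_Z h(Z) ≤ Σ_{δ ∈ Δ} w_δ h(δ) for every entropic vector h of a joint distribution on V with finite support. Then there exists a model Σ_out of the disjunctive datalog rule (an assignment of a finite relation Q_Z over variables Z to each Z ∈ Σ_out such that every tuple t in the full join of Σ_in has π_Z(t) ∈ Q_Z for some Z) whose total size Σ_Z |Q_Z| is at most |Σ_out| · Π_{δ ∈ Δ} deg_{Σ_in}(δ)^{w_δ}. -/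
/-!
Greedy model: let `T` be a largest set of tuples of the full join whose projections onto every
output schema `Z` are pairwise distinct, and put `Q_Z := π_Z(T)`. By maximality every join tuple
agrees with some tuple of `T` on some `Z`, so `Q` is a model, and `|Q_Z| ≤ |T|`. Under the uniform
distribution on `T`, injectivity gives `h(Z) = log |T|` for every `Z`, while `h(Y|X) ≤ log deg(Y|X)`
because, once `X` is fixed, the tuples of `T` take at most `deg(Y|X)` values on `Y` (log-sum
inequality). The entropic inequality then yields `log |T| ≤ ∑ w_δ log deg(δ)`.
-/

/-- Projection of a full tuple onto a set of variables, as a partial tuple. -/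
def proj {V Dom : Type*} [DecidableEq V] (S : Finset V) (t : V → Dom) : V → Option Dom :=
  fun v => if v ∈ S then some (t v) else none

/-- Projection of a partial tuple onto a set of variables. -/
def projP {V Dom : Type*} [DecidableEq V] (S : Finset V) (r : V → Option Dom) :
    V → Option Dom :=
  fun v => if v ∈ S then r v else none

/-- `deg_R(Y|X)`: the maximum, over partial `X`-tuples `x`, of the number of distinct
`Y`-projections of tuples of `R` whose `X`-projection is `x`. -/
def degRel {V Dom : Type*} [Fintype V] [DecidableEq V] [DecidableEq Dom]
    (R : Finset (V → Option Dom)) (X Y : Finset V) : ℕ :=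
  (R.image (projP X)).sup fun x =>
    ((R.filter fun r => projP X r = x).image (projP Y)).card

/-- The entropy of the marginal on `S` of a finitely supported distribution `(F, p)`
on tuples. -/
noncomputable def marginalEntropy {V Dom : Type*} [Fintype V] [DecidableEq V]
    [DecidableEq Dom] (F : Finset (V → Dom)) (p : (V → Dom) → ℝ) (S : Finset V) : ℝ :=
  -∑ x ∈ F.image (proj S),
      (∑ t ∈ F.filter fun t => proj S t = x, p t) *
        Real.log (∑ t ∈ F.filter fun t => proj S t = x, p t)

/-- `h` is the entropic vector of some finitely supported joint distribution on the
variables `V` with values in `Dom`. -/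
def IsEntropic {V : Type*} (Dom : Type*) [Fintype V] [DecidableEq V] [DecidableEq Dom]
    (h : Finset V → ℝ) : Prop :=
  ∃ (F : Finset (V → Dom)) (p : (V → Dom) → ℝ),
    (∀ t ∈ F, 0 < p t) ∧ (∑ t ∈ F, p t) = 1 ∧
    ∀ S : Finset V, h S = marginalEntropy F p S

section Development

open Finset Real

theorem Real.sum_negMulLog_le {ι : Type*} (A : Finset ι) (m : ι → ℝ) (hm : ∀ i ∈ A, 0 ≤ m i) :
    ∑ i ∈ A, negMulLog (m i) ≤ negMulLog (∑ i ∈ A, m i) + (∑ i ∈ A, m i) * log #A := by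
  rcases A.eq_empty_or_nonempty with rfl | hA
  · simp
  set k : ℝ := ((#A : ℕ) : ℝ)
  have hk : 0 < k := Nat.cast_pos.mpr hA.card_pos
  have jensen := concaveOn_negMulLog.le_map_sum (t := A) (w := fun _ => k⁻¹) (p := m)
    (fun _ _ => by positivity) (by simp [k, hk.ne']) (fun i hi => Set.mem_Ici.mpr (hm i hi))
  simp only [smul_eq_mul, ← mul_sum] at jensen
  rw [mul_comm, negMulLog_mul, negMulLog, log_inv] at jensen
  have := mul_le_mul_of_nonneg_left jensen hk.le
  field_simp at this
  linarith

theorem Finset.exists_card_maximal {α : Type*} {P : Finset α → Prop} (h0 : P ∅) {N : ℕ}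
    (hN : ∀ T, P T → #T ≤ N) : ∃ T, P T ∧ ∀ T', P T' → #T' ≤ #T := by
  set S := {n | ∃ T, P T ∧ #T = n}
  have hbdd : BddAbove S := ⟨N, by rintro _ ⟨T, hT, rfl⟩; exact hN T hT⟩
  obtain ⟨T, hT, hcard⟩ := Nat.sSup_mem (s := S) ⟨0, ∅, h0, rfl⟩ hbdd
  exact ⟨T, hT, fun T' hT' => hcard ▸ le_csSup hbdd ⟨T', hT', rfl⟩⟩

section EntropyOfMaps

variable {α β γ : Type*} [DecidableEq β] [DecidableEq γ]

noncomputable def entropyOf (F : Finset α) (p : α → ℝ) (f : α → β) : ℝ :=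
  ∑ b ∈ F.image f, negMulLog (∑ t ∈ F with f t = b, p t)

theorem entropyOf_of_injOn {F : Finset α} (p : α → ℝ) {f : α → β} (hf : Set.InjOn f F) :
    entropyOf F p f = ∑ t ∈ F, negMulLog (p t) := by
  rw [entropyOf, sum_image hf]
  refine sum_congr rfl fun t ht => ?_
  have hfiber : {s ∈ F | f s = f t} = {t} := by
    ext s
    simp only [mem_filter, mem_singleton]
    exact ⟨fun h => hf h.1 ht h.2, by rintro rfl; exact ⟨ht, rfl⟩⟩
  rw [hfiber, sum_singleton]

theorem Finset.sum_filter_image_sum_filter (F : Finset α) (p : α → ℝ) (f : α → β) (φ : β → γ)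
    (c : γ) :
    ∑ b ∈ F.image f with φ b = c, ∑ t ∈ F with f t = b, p t = ∑ t ∈ F with φ (f t) = c, p t := by
  rw [← sum_fiberwise_of_maps_to (s := {t ∈ F | φ (f t) = c}) (t := {b ∈ F.image f | φ b = c})
    (g := f) fun t ht => mem_filter.2 ⟨mem_image_of_mem f (mem_filter.1 ht).1, (mem_filter.1 ht).2⟩]
  refine sum_congr rfl fun b hb => ?_
  rw [filter_filter]
  refine sum_congr (filter_congr fun t _ => ?_) fun _ _ => rfl
  exact ⟨fun htb => ⟨htb ▸ (mem_filter.1 hb).2, htb⟩, And.right⟩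

theorem entropyOf_le_entropyOf_comp_add {F : Finset α} {p : α → ℝ} (hp : ∀ t ∈ F, 0 ≤ p t)
    (f : α → β) (φ : β → γ) {D : ℕ} (hD : ∀ c, #{b ∈ F.image f | φ b = c} ≤ D) :
    entropyOf F p f ≤ entropyOf F p (φ ∘ f) + (∑ t ∈ F, p t) * log D := by
  let m (b : β) : ℝ := ∑ t ∈ F with f t = b, p t
  let M (c : γ) : ℝ := ∑ t ∈ F with φ (f t) = c, p t
  have hm (b : β) : 0 ≤ m b := sum_nonneg fun s hs => hp s (mem_filter.1 hs).1
  have hmaps : ∀ b ∈ F.image f, φ b ∈ F.image (φ ∘ f) := by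
    intro b hb
    obtain ⟨t, ht, rfl⟩ := mem_image.1 hb
    exact mem_image_of_mem _ ht
  have hfiber (c : γ) (hc : c ∈ F.image (φ ∘ f)) :
      ∑ b ∈ F.image f with φ b = c, negMulLog (m b) ≤ negMulLog (M c) + M c * log D := by
    have hM : M c = ∑ b ∈ F.image f with φ b = c, m b :=
      (sum_filter_image_sum_filter F p f φ c).symm
    have hne : 0 < #{b ∈ F.image f | φ b = c} := by
      obtain ⟨t, ht, rfl⟩ := mem_image.1 hc
      exact card_pos.2 ⟨f t, mem_filter.2 ⟨mem_image_of_mem f ht, rfl⟩⟩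
    rw [hM]
    refine (Real.sum_negMulLog_le _ m fun b _ => hm b).trans ?_
    gcongr
    · exact sum_nonneg fun b _ => hm b
    · exact hD c
  calc entropyOf F p f = ∑ c ∈ F.image (φ ∘ f), ∑ b ∈ F.image f with φ b = c, negMulLog (m b) :=
        (sum_fiberwise_of_maps_to hmaps _).symm
    _ ≤ ∑ c ∈ F.image (φ ∘ f), (negMulLog (M c) + M c * log D) := sum_le_sum hfiber
    _ = entropyOf F p (φ ∘ f) + (∑ t ∈ F, p t) * log D := by
        rw [sum_add_distrib, ← sum_mul]
        congr 2
        exact sum_fiberwise_of_maps_to (g := φ ∘ f) (fun t ht => mem_image_of_mem _ ht) p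

end EntropyOfMaps

section Projections

variable {V Dom : Type*} [DecidableEq V]

theorem projP_proj (X S : Finset V) (t : V → Dom) : projP X (proj S t) = proj (X ∩ S) t := by
  funext v
  by_cases hX : v ∈ X <;> by_cases hS : v ∈ S <;> simp [projP, proj, hX, hS]

theorem projP_proj_of_subset {X S : Finset V} (h : X ⊆ S) (t : V → Dom) :
    projP X (proj S t) = proj X t := by
  rw [projP_proj, inter_eq_left.2 h]

theorem proj_union_eq {X Y : Finset V} {t t' : V → Dom} (hX : proj X t = proj X t')
    (hY : proj Y t = proj Y t') : proj (X ∪ Y) t = proj (X ∪ Y) t' := by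
  funext v
  have hXv := congrFun hX v
  have hYv := congrFun hY v
  by_cases hvX : v ∈ X <;> by_cases hvY : v ∈ Y <;> simp_all [proj]

end Projections

section Degrees

variable {V Dom : Type*} [Fintype V] [DecidableEq V] [DecidableEq Dom]

theorem degRel_pos {Rel : Finset (V → Option Dom)} (hRel : Rel.Nonempty) (X Y : Finset V) :
    0 < degRel Rel X Y := by
  obtain ⟨r, hr⟩ := hRel
  refine lt_of_lt_of_le ?_ (le_sup (f := fun x => #((Rel.filter fun r => projP X r = x).image
    (projP Y))) (mem_image_of_mem (projP X) hr))
  exact card_pos.2 ⟨projP Y r, mem_image_of_mem _ (mem_filter.2 ⟨hr, rfl⟩)⟩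

theorem card_filter_image_proj_le_degRel {T : Finset (V → Dom)} {Rel : Finset (V → Option Dom)}
    {W Y : Finset V} (hYW : Y ⊆ W) (hT : ∀ t ∈ T, proj W t ∈ Rel) (X : Finset V)
    (c : V → Option Dom) : #{z ∈ T.image (proj (X ∪ Y)) | projP X z = c} ≤ degRel Rel X Y := by
  have hmem {z} : z ∈ {z ∈ T.image (proj (X ∪ Y)) | projP X z = c} ↔
      ∃ t ∈ T, proj X t = c ∧ proj (X ∪ Y) t = z := by
    simp only [mem_filter, mem_image]
    constructor
    · rintro ⟨⟨t, ht, rfl⟩, hc⟩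
      exact ⟨t, ht, (projP_proj_of_subset subset_union_left t).symm.trans hc, rfl⟩
    · rintro ⟨t, ht, hc, rfl⟩
      exact ⟨⟨t, ht, rfl⟩, (projP_proj_of_subset subset_union_left t).trans hc⟩
  rcases eq_empty_or_nonempty {z ∈ T.image (proj (X ∪ Y)) | projP X z = c} with hempty | ⟨z₀, hz₀⟩
  · simp [hempty]
  obtain ⟨t₀, ht₀, hc₀, -⟩ := hmem.1 hz₀
  -- every tuple of the fiber sits in `Rel` above the same `X`-tuple `projP (X ∩ W) c`
  have hrel {t} (hc : proj X t = c) : projP X (proj W t) = projP (X ∩ W) c := by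
    rw [projP_proj, ← hc, projP_proj_of_subset inter_subset_left]
  calc #{z ∈ T.image (proj (X ∪ Y)) | projP X z = c}
      ≤ #((Rel.filter fun r => projP X r = projP (X ∩ W) c).image (projP Y)) := by
        refine card_le_card_of_injOn (projP Y) ?_ ?_
        · intro z hz
          obtain ⟨t, ht, hc, rfl⟩ := hmem.1 hz
          rw [mem_coe, projP_proj_of_subset subset_union_right, ← projP_proj_of_subset hYW]
          exact mem_image_of_mem _ (mem_filter.2 ⟨hT t ht, hrel hc⟩)
        · intro z hz z' hz' hY
          obtain ⟨t, -, hc, rfl⟩ := hmem.1 hz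
          obtain ⟨t', -, hc', rfl⟩ := hmem.1 hz'
          simp only [projP_proj_of_subset subset_union_right] at hY
          exact proj_union_eq (hc.trans hc'.symm) hY
    _ ≤ degRel Rel X Y :=
        le_sup (f := fun x => #((Rel.filter fun r => projP X r = x).image (projP Y)))
          (hrel hc₀ ▸ mem_image_of_mem _ (hT t₀ ht₀))

end Degrees

section Entropy

variable {V Dom : Type*} [Fintype V] [DecidableEq V] [DecidableEq Dom]

theorem marginalEntropy_eq_entropyOf (F : Finset (V → Dom)) (p : (V → Dom) → ℝ) (S : Finset V) :
    marginalEntropy F p S = entropyOf F p (proj S) := by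
  simp only [marginalEntropy, entropyOf, negMulLog, neg_mul, sum_neg_distrib]

theorem marginalEntropy_union_sub_le {F : Finset (V → Dom)} {p : (V → Dom) → ℝ}
    (hp : ∀ t ∈ F, 0 ≤ p t) (hp1 : ∑ t ∈ F, p t = 1) {Rel : Finset (V → Option Dom)}
    {W Y : Finset V} (hYW : Y ⊆ W) (hF : ∀ t ∈ F, proj W t ∈ Rel) (X : Finset V) :
    marginalEntropy F p (X ∪ Y) - marginalEntropy F p X ≤ log (degRel Rel X Y) := by
  have hX : (proj X : (V → Dom) → V → Option Dom) = projP X ∘ proj (X ∪ Y) :=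
    funext fun t => (projP_proj_of_subset subset_union_left t).symm
  have := entropyOf_le_entropyOf_comp_add hp (proj (X ∪ Y)) (projP X)
    (card_filter_image_proj_le_degRel hYW hF X)
  rw [marginalEntropy_eq_entropyOf, marginalEntropy_eq_entropyOf, hX]
  linarith [hp1 ▸ this]

theorem isEntropic_uniform {T : Finset (V → Dom)} (hT : T.Nonempty) :
    IsEntropic Dom (marginalEntropy T fun _ => (#T : ℝ)⁻¹) :=
  ⟨T, _, fun _ _ => by positivity, by simp [hT.card_pos.ne'], fun _ => rfl⟩

theorem marginalEntropy_uniform_of_injOn {T : Finset (V → Dom)} {S : Finset V}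
    (hS : Set.InjOn (proj S) (T : Set (V → Dom))) :
    marginalEntropy T (fun _ => (#T : ℝ)⁻¹) S = log #T := by
  rw [marginalEntropy_eq_entropyOf, entropyOf_of_injOn _ hS, sum_const, nsmul_eq_mul, negMulLog,
    log_inv]
  rcases T.eq_empty_or_nonempty with rfl | hT
  · simp
  field_simp [hT.card_pos.ne']

end Entropy

section Schema

variable {V Dom : Type*} [DecidableEq V] {ι ιout : Type*}
  (vars : ι → Finset V) (R : ι → Finset (V → Option Dom)) (Zvars : ιout → Finset V)

def IsWitnessSet (T : Finset (V → Dom)) : Prop :=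
  (∀ t ∈ T, ∀ i, proj (vars i) t ∈ R i) ∧ ∀ o, Set.InjOn (proj (Zvars o)) (T : Set (V → Dom))

theorem IsWitnessSet.empty : IsWitnessSet vars R Zvars (∅ : Finset (V → Dom)) :=
  ⟨fun _ ht => absurd ht (notMem_empty _), fun _ => by simp⟩

variable [Fintype V] [DecidableEq Dom]

/-- `deg_{Σ_in}(δ)`; for an unguarded `δ` this is `sInf ∅ = 0`, not `∞`. -/
noncomputable def guardedDeg (δ : Finset V × Finset V) : ℕ :=
  sInf {d : ℕ | ∃ i : ι, δ.2 ⊆ vars i ∧ d = degRel (R i) δ.1 δ.2}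

theorem exists_guardedDeg_eq {δ : Finset V × Finset V} (h : ∃ i, δ.2 ⊆ vars i) :
    ∃ i, δ.2 ⊆ vars i ∧ guardedDeg vars R δ = degRel (R i) δ.1 δ.2 := by
  obtain ⟨i, hi⟩ := h
  exact Nat.sInf_mem (s := {d | ∃ i, δ.2 ⊆ vars i ∧ d = degRel (R i) δ.1 δ.2}) ⟨_, i, hi, rfl⟩

variable {vars R Zvars}

theorem IsWitnessSet.card_le {T : Finset (V → Dom)} (hT : IsWitnessSet vars R Zvars T)
    {Δ : Finset (Finset V × Finset V)} (hguard : ∀ δ ∈ Δ, ∃ i : ι, δ.2 ⊆ vars i)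
    {lam : ιout → ℝ} [Fintype ιout] (hlam1 : ∑ o, lam o = 1) {w : Finset V × Finset V → ℝ}
    (hw : ∀ δ ∈ Δ, 0 ≤ w δ)
    (hineq : ∀ h : Finset V → ℝ, IsEntropic Dom h →
      ∑ o, lam o * h (Zvars o) ≤ ∑ δ ∈ Δ, w δ * (h (δ.1 ∪ δ.2) - h δ.1)) :
    (#T : ℝ) ≤ ∏ δ ∈ Δ, (guardedDeg vars R δ : ℝ) ^ w δ := by
  rcases T.eq_empty_or_nonempty with rfl | hne
  · simpa using prod_nonneg fun δ _ => rpow_nonneg (Nat.cast_nonneg (guardedDeg vars R δ)) (w δ)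
  set h := marginalEntropy T fun _ => (#T : ℝ)⁻¹
  have hdeg (δ) (hδ : δ ∈ Δ) : 0 < (guardedDeg vars R δ : ℝ) ∧
      h (δ.1 ∪ δ.2) - h δ.1 ≤ log (guardedDeg vars R δ) := by
    obtain ⟨i, hi, hi_eq⟩ := exists_guardedDeg_eq vars R (hguard δ hδ)
    obtain ⟨t, ht⟩ := hne
    rw [hi_eq]
    exact ⟨Nat.cast_pos.2 (degRel_pos ⟨_, hT.1 t ht i⟩ _ _),
      marginalEntropy_union_sub_le (fun _ _ => by positivity) (by simp [card_ne_zero_of_mem ht]) hi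
        (fun t ht => hT.1 t ht i) δ.1⟩
  have hlog : log #T ≤ ∑ δ ∈ Δ, w δ * log (guardedDeg vars R δ) := calc
    log #T = ∑ o, lam o * h (Zvars o) := by
        simp only [h, marginalEntropy_uniform_of_injOn (hT.2 _), ← sum_mul, hlam1, one_mul]
    _ ≤ ∑ δ ∈ Δ, w δ * (h (δ.1 ∪ δ.2) - h δ.1) := hineq h (isEntropic_uniform hne)
    _ ≤ _ := sum_le_sum fun δ hδ => mul_le_mul_of_nonneg_left (hdeg δ hδ).2 (hw δ hδ)
  calc (#T : ℝ) = exp (log #T) := (exp_log (Nat.cast_pos.2 hne.card_pos)).symm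
    _ ≤ exp (∑ δ ∈ Δ, w δ * log (guardedDeg vars R δ)) := exp_le_exp.2 hlog
    _ = ∏ δ ∈ Δ, (guardedDeg vars R δ : ℝ) ^ w δ := by
        rw [exp_sum]
        exact prod_congr rfl fun δ hδ => by rw [rpow_def_of_pos (hdeg δ hδ).1, mul_comm]

theorem IsWitnessSet.insert {T : Finset (V → Dom)} (hT : IsWitnessSet vars R Zvars T)
    {t : V → Dom} (htT : t ∉ T) (ht : ∀ i, proj (vars i) t ∈ R i)
    (hnew : ∀ o, proj (Zvars o) t ∉ T.image (proj (Zvars o))) :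
    IsWitnessSet vars R Zvars (insert t T) := by
  refine ⟨fun s hs => ?_, fun o => ?_⟩
  · rcases mem_insert.1 hs with rfl | hs
    · exact ht
    · exact hT.1 s hs
  · rw [coe_insert, Set.injOn_insert (mem_coe.not.2 htT)]
    exact ⟨hT.2 o, by simpa using hnew o⟩

theorem exists_isWitnessSet_covering [Nonempty ιout] {N : ℕ}
    (hN : ∀ T, IsWitnessSet vars R Zvars T → #T ≤ N) :
    ∃ T, IsWitnessSet vars R Zvars T ∧ ∀ t : V → Dom, (∀ i, proj (vars i) t ∈ R i) →
      ∃ o, proj (Zvars o) t ∈ T.image (proj (Zvars o)) := by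
  obtain ⟨T, hT, hmax⟩ := exists_card_maximal (IsWitnessSet.empty vars R Zvars) hN
  refine ⟨T, hT, fun t ht => ?_⟩
  by_contra! hnew
  have htT : t ∉ T := fun htT => hnew (Classical.arbitrary ιout) (mem_image_of_mem _ htT)
  have := hmax _ (hT.insert htT ht hnew)
  rw [card_insert_of_notMem htT] at this
  omega

end Schema

end Development

/-- A degree constraint `δ = (Y|X)` is encoded as the pair `(X, Y)` (condition first). -/
theorem stmt_19_general {V Dom : Type*} [Fintype V] [DecidableEq V] [DecidableEq Dom]
    {ι ιout : Type*} [Fintype ιout]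
    (vars : ι → Finset V) (R : ι → Finset (V → Option Dom))
    (Zvars : ιout → Finset V)
    (Δ : Finset (Finset V × Finset V))
    (hguard : ∀ δ ∈ Δ, ∃ i : ι, δ.2 ⊆ vars i)
    (lam : ιout → ℝ) (hlam1 : ∑ o : ιout, lam o = 1)
    (w : Finset V × Finset V → ℝ) (hw : ∀ δ ∈ Δ, 0 ≤ w δ)
    (hineq : ∀ h : Finset V → ℝ, IsEntropic Dom h →
      ∑ o : ιout, lam o * h (Zvars o) ≤
        ∑ δ ∈ Δ, w δ * (h (δ.1 ∪ δ.2) - h δ.1)) :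
    ∃ Q : ιout → Finset (V → Option Dom),
      (∀ t : V → Dom, (∀ i, proj (vars i) t ∈ R i) →
        ∃ o : ιout, proj (Zvars o) t ∈ Q o) ∧
      (∑ o : ιout, ((Q o).card : ℝ)) ≤ (Fintype.card ιout : ℝ) *
        ∏ δ ∈ Δ,
          ((sInf {d : ℕ | ∃ i : ι, δ.2 ⊆ vars i ∧ d = degRel (R i) δ.1 δ.2} : ℕ) : ℝ)
            ^ (w δ) := by
  have : Nonempty ιout := by
    by_contra h
    simp [not_nonempty_iff.1 h] at hlam1
  have hbound (T) (hT : IsWitnessSet vars R Zvars T) :=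
    hT.card_le hguard hlam1 hw hineq
  obtain ⟨T, hT, hcover⟩ := exists_isWitnessSet_covering fun T hT => Nat.le_floor (hbound T hT)
  refine ⟨fun o => T.image (proj (Zvars o)), hcover, ?_⟩
  calc ∑ o, ((T.image (proj (Zvars o))).card : ℝ) ≤ ∑ _o : ιout, (T.card : ℝ) :=
        Finset.sum_le_sum fun o _ => by exact_mod_cast Finset.card_image_le
    _ = Fintype.card ιout * T.card := by simp
    _ ≤ _ := by gcongr; exact hbound T hT

/-- A degree constraint `δ = (Y|X)` is encoded as the pair `(X, Y)` (condition first).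
The input schema is indexed by `ι` with variable sets `vars` and relations `R`;
the output schema is indexed by `ιout` with variable sets `Zvars`. -/
theorem stmt_19 {V Dom : Type*} [Fintype V] [DecidableEq V] [DecidableEq Dom]
    {ι ιout : Type*} [Fintype ι] [Fintype ιout]
    (vars : ι → Finset V) (R : ι → Finset (V → Option Dom))
    (hR : ∀ i, ∀ r ∈ R i, ∃ t : V → Dom, r = proj (vars i) t)
    (Zvars : ιout → Finset V)
    (Δ : Finset (Finset V × Finset V)) (hΔ : ∀ δ ∈ Δ, Disjoint δ.1 δ.2)
    (hguard : ∀ δ ∈ Δ, ∃ i : ι, δ.2 ⊆ vars i)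
    (lam : ιout → ℝ) (hlam0 : ∀ o, 0 ≤ lam o) (hlam1 : ∑ o : ιout, lam o = 1)
    (w : Finset V × Finset V → ℝ) (hw : ∀ δ ∈ Δ, 0 ≤ w δ)
    (hineq : ∀ h : Finset V → ℝ, IsEntropic Dom h →
      ∑ o : ιout, lam o * h (Zvars o) ≤
        ∑ δ ∈ Δ, w δ * (h (δ.1 ∪ δ.2) - h δ.1)) :
    ∃ Q : ιout → Finset (V → Option Dom),
      (∀ t : V → Dom, (∀ i, proj (vars i) t ∈ R i) →
        ∃ o : ιout, proj (Zvars o) t ∈ Q o) ∧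
      (∑ o : ιout, ((Q o).card : ℝ)) ≤ (Fintype.card ιout : ℝ) *
        ∏ δ ∈ Δ,
          ((sInf {d : ℕ | ∃ i : ι, δ.2 ⊆ vars i ∧ d = degRel (R i) δ.1 δ.2} : ℕ) : ℝ)
            ^ (w δ) :=
  stmt_19_general vars R Zvars Δ hguard lam hlam1 w hw hineq
end
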